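/- arXiv:2507.16232 — 2 statements merged into one kernel-verified Lean document; each statement's English description precedes it below -/
import Mathlib

section
/- If a flow (X,T) is distal and contains a minimal subsystem that is sensitive, then the induced flow (E(X),T) is sensitive. -/
open Filter Set Topology Uniformity

/-- The enveloping semigroup of the flow: the pointwise closure of the translation
maps `x ↦ t • x` inside `X → X` (with the product topology). -/
def envSemigroup (T X : Type*) [SMul T X] [TopologicalSpace X] : Set (X → X) :=
  closure (Set.range fun t : T => fun x : X => t • x)

/-- `(x, y)` is a proximal pair for the `T`-action. -/
def ProxPair (T : Type*) {X : Type*} [SMul T X] [UniformSpace X] (x y : X) : Prop :=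
  ∀ U ∈ 𝓤 X, ∃ t : T, (t • x, t • y) ∈ U

/-- Sensitivity of the subflow on a subset `A` (with the relative uniformity). -/
def SensitiveOn (T : Type*) {X : Type*} [SMul T X] [UniformSpace X] (A : Set X) : Prop :=
  ∃ V ∈ 𝓤 X, ∀ x ∈ A, ∀ U ∈ 𝓤 X, ∃ y ∈ A, (x, y) ∈ U ∧ ∃ t : T, (t • x, t • y) ∉ V

/-- `M` is a minimal subsystem: nonempty, closed, invariant, with no proper
nonempty closed invariant subset. -/
def IsMinimalSubset (T : Type*) {X : Type*} [SMul T X] [TopologicalSpace X]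
    (M : Set X) : Prop :=
  M.Nonempty ∧ IsClosed M ∧ (∀ t : T, ∀ x ∈ M, t • x ∈ M) ∧
    ∀ N ⊆ M, N.Nonempty → IsClosed N → (∀ t : T, ∀ x ∈ N, t • x ∈ N) → N = M


/-!
In a distal flow an idempotent `u` of `E(X)` is the identity, since `(x, u x)` is proximal. By
Ellis' idempotent theorem applied to the compact semigroup `E(X) ∘ p`, every `p ∈ E(X)` then has a
left inverse, so every `T`-orbit is dense in `E(X)`. Hence finitely many translates of a closed
neighbourhood `K` of `p` cover `E(X)`; evaluating at `y₀ ∈ Y` covers `Y` by finitely many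
translates of the closed set `{q y₀ | q ∈ K}`, and Baire's theorem in `Y` gives it nonempty interior
in `Y`. Sensitivity lifts along such an equivariant uniformly continuous map: two nearby points
of that interior which the action separates have lifts near `p`, and one of them is separated
from `p`.
-/

section EnvSemigroup

variable {T X : Type*} [TopologicalSpace X]

theorem isCompact_envSemigroup [SMul T X] [CompactSpace X] : IsCompact (envSemigroup T X) :=
  isClosed_closure.isCompact

theorem const_smul_mem_envSemigroup [SMul T X] (t : T) : (t • ·) ∈ envSemigroup T X :=
  subset_closure (mem_range_self t)

variable [Monoid T] [MulAction T X] [ContinuousConstSMul T X]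

theorem smul_mem_envSemigroup {q : X → X} (hq : q ∈ envSemigroup T X) (t : T) :
    t • q ∈ envSemigroup T X := by
  refine MapsTo.closure_left ?_ (continuous_const_smul t) isClosed_closure hq
  rintro _ ⟨s, rfl⟩
  change (fun x => t • s • x) ∈ envSemigroup T X
  simp only [← mul_smul]
  exact const_smul_mem_envSemigroup (t * s)

theorem comp_mem_envSemigroup {p q : X → X} (hp : p ∈ envSemigroup T X)
    (hq : q ∈ envSemigroup T X) : p ∘ q ∈ envSemigroup T X := by
  refine MapsTo.closure_left ?_ (Pi.continuous_precomp q) isClosed_closure hp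
  rintro _ ⟨s, rfl⟩
  exact smul_mem_envSemigroup hq s

theorem image_eval_envSemigroup [CompactSpace X] [T2Space X] {Y : Set X}
    (hY : IsMinimalSubset T Y) {y : X} (hy : y ∈ Y) :
    (fun q : X → X => q y) '' envSemigroup T X = Y := by
  obtain ⟨-, hYclosed, hYinv, hYmin⟩ := hY
  refine hYmin _ ?_ ⟨_, _, const_smul_mem_envSemigroup 1, rfl⟩
    (isCompact_envSemigroup.image (continuous_apply y)).isClosed ?_
  · rintro _ ⟨q, hq, rfl⟩
    refine MapsTo.closure_left ?_ (continuous_apply y) hYclosed hq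
    rintro _ ⟨t, rfl⟩
    exact hYinv t y hy
  · rintro t _ ⟨q, hq, rfl⟩
    exact ⟨t • q, smul_mem_envSemigroup hq t, rfl⟩

end EnvSemigroup

section Baire

variable {X : Type*} [TopologicalSpace X] [CompactSpace X] [T2Space X]

theorem exists_isOpen_inter_subset_of_subset_biUnion {Y : Set X} (hY : IsClosed Y)
    (hYne : Y.Nonempty) {ι : Type*} {s : Set ι} (hs : s.Countable) {D : ι → Set X}
    (hD : ∀ i ∈ s, IsClosed (D i)) (hcover : Y ⊆ ⋃ i ∈ s, D i) :
    ∃ i ∈ s, ∃ G, IsOpen G ∧ (G ∩ Y).Nonempty ∧ G ∩ Y ⊆ D i := by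
  have : CompactSpace Y := isCompact_iff_compactSpace.mp hY.isCompact
  have : Nonempty Y := hYne.to_subtype
  have hdense := dense_biUnion_interior_of_closed (f := fun i => ((↑) : Y → X) ⁻¹' D i)
    (fun i hi => (hD i hi).preimage continuous_subtype_val) hs
    (eq_univ_of_forall fun y => by simpa using hcover y.2)
  obtain ⟨y, hy⟩ := hdense.nonempty
  obtain ⟨i, hi, hyi⟩ := mem_iUnion₂.mp hy
  obtain ⟨V, hVD, hV, hyV⟩ := mem_interior.mp hyi
  obtain ⟨G, hG, rfl⟩ := isOpen_induced_iff.mp hV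
  exact ⟨i, hi, G, hG, ⟨y, hyV, y.2⟩, fun x hx => hVD (show (⟨x, hx.2⟩ : Y) ∈ _ from hx.1)⟩

open Pointwise in
theorem exists_isOpen_inter_subset_of_subset_biUnion_preimage_smul {T : Type*} [Group T]
    [MulAction T X] [ContinuousConstSMul T X] {Y : Set X} (hY : IsClosed Y) (hYne : Y.Nonempty)
    (hYinv : ∀ t : T, ∀ x ∈ Y, t • x ∈ Y) {C : Set X} (hC : IsClosed C) {s : Set T}
    (hs : s.Countable) (hcover : Y ⊆ ⋃ t ∈ s, (t • ·) ⁻¹' C) :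
    ∃ G, IsOpen G ∧ (G ∩ Y).Nonempty ∧ G ∩ Y ⊆ C := by
  obtain ⟨t, -, G, hG, ⟨y, hyG, hyY⟩, hGC⟩ := exists_isOpen_inter_subset_of_subset_biUnion hY
    hYne hs (fun t _ => hC.preimage (continuous_const_smul t)) hcover
  refine ⟨t • G, hG.smul t, ⟨t • y, smul_mem_smul_set hyG, hYinv t y hyY⟩, ?_⟩
  rintro _ ⟨hx, hxY⟩
  obtain ⟨x, hxG, rfl⟩ := mem_smul_set.mp hx
  exact hGC ⟨hxG, by simpa using hYinv t⁻¹ _ hxY⟩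

end Baire

-- Feeble openness of `π : A → B`; relative interiors in `B` appear as `G ∩ B` with `G` open.
def FeebleOpenOn {X Y : Type*} [TopologicalSpace X] [TopologicalSpace Y] (π : X → Y)
    (A : Set X) (B : Set Y) : Prop :=
  ∀ O, IsOpen O → (O ∩ A).Nonempty → ∃ G, IsOpen G ∧ (G ∩ B).Nonempty ∧ G ∩ B ⊆ π '' (O ∩ A)

open UniformSpace in
theorem SensitiveOn.of_feebleOpenOn {T X Y : Type*} [SMul T X] [SMul T Y] [UniformSpace X]
    [UniformSpace Y] {A : Set X} {B : Set Y} {π : X → Y} (hπ : UniformContinuous π)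
    (hequiv : ∀ (t : T) x, π (t • x) = t • π x) (hfeeble : FeebleOpenOn π A B)
    (hB : SensitiveOn T B) : SensitiveOn T A := by
  obtain ⟨V, hV, hsens⟩ := hB
  obtain ⟨W, hW, hWsymm, hWV⟩ := comp_symm_of_uniformity hV
  refine ⟨Prod.map π π ⁻¹' W, hπ hW, fun p hp U hU => ?_⟩
  obtain ⟨G, hG, ⟨y₁, hy₁G, hy₁B⟩, hGB⟩ := hfeeble (interior (ball p U)) isOpen_interior
    ⟨p, mem_interior_iff_mem_nhds.mpr (ball_mem_nhds p hU), hp⟩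
  obtain ⟨U₁, hU₁, hU₁G⟩ := UniformSpace.mem_nhds_iff.mp (hG.mem_nhds hy₁G)
  obtain ⟨y₂, hy₂B, hy₁₂, t, hsep⟩ := hsens y₁ hy₁B U₁ hU₁
  obtain ⟨q₁, ⟨hq₁U, hq₁A⟩, rfl⟩ := hGB ⟨hy₁G, hy₁B⟩
  obtain ⟨q₂, ⟨hq₂U, hq₂A⟩, rfl⟩ := hGB ⟨hU₁G hy₁₂, hy₂B⟩
  -- `t • π q₁` and `t • π q₂` are `V`-apart, so one of them is not `W`-close to `t • π p`
  by_cases h₁ : (t • p, t • q₁) ∈ Prod.map π π ⁻¹' W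
  · refine ⟨q₂, hq₂A, (interior_subset hq₂U : q₂ ∈ ball p U), t, fun h₂ => hsep ?_⟩
    simp only [mem_preimage, Prod.map_apply, hequiv] at h₁ h₂
    exact hWV (SetRel.prodMk_mem_comp (hWsymm h₁) h₂)
  · exact ⟨q₁, hq₁A, (interior_subset hq₁U : q₁ ∈ ball p U), t, h₁⟩

section Distal

open UniformSpace

variable {T X : Type*} [UniformSpace X]

theorem eq_id_of_mem_envSemigroup_of_comp_self [SMul T X]
    (hdistal : ∀ x y : X, ProxPair T x y → x = y) {u : X → X} (hu : u ∈ envSemigroup T X)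
    (huu : u ∘ u = u) : u = id := by
  funext x
  refine (hdistal x (u x) fun U hU => ?_).symm
  obtain ⟨W, hW, hWsymm, hWU⟩ := comp_symm_of_uniformity hU
  -- a translation close to `u` at `x` and at `u x` moves both points near `u x = u (u x)`
  have hnear : (· x) ⁻¹' ball (u x) W ∩ (· (u x)) ⁻¹' ball (u x) W ∈ 𝓝 u := by
    refine inter_mem ((continuous_apply x).continuousAt.preimage_mem_nhds
      (ball_mem_nhds _ hW)) ?_
    have := (continuous_apply (u x)).continuousAt.preimage_mem_nhds
      (ball_mem_nhds (u (u x)) hW)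
    rwa [show u (u x) = u x from congrFun huu x] at this
  obtain ⟨_, ⟨hx, hux⟩, t, rfl⟩ := mem_closure_iff_nhds.mp hu _ hnear
  exact ⟨t, hWU (SetRel.prodMk_mem_comp (hWsymm hx) hux)⟩

variable [Monoid T] [MulAction T X] [ContinuousConstSMul T X] [CompactSpace X] [T2Space X]

theorem exists_comp_eq_id_of_mem_envSemigroup (hdistal : ∀ x y : X, ProxPair T x y → x = y)
    {p : X → X} (hp : p ∈ envSemigroup T X) : ∃ q ∈ envSemigroup T X, q ∘ p = id := by
  let : Semigroup (X → X) := { mul := (· ∘ ·), mul_assoc := fun _ _ _ => rfl }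
  obtain ⟨_, ⟨q, hq, rfl⟩, hidem⟩ := exists_idempotent_in_compact_subsemigroup
    Pi.continuous_precomp ((· ∘ p) '' envSemigroup T X) ⟨p ∘ p, p, hp, rfl⟩
    (isCompact_envSemigroup.image (Pi.continuous_precomp p)) (by
      rintro _ ⟨r, hr, rfl⟩ _ ⟨s, hs, rfl⟩
      exact ⟨r ∘ p ∘ s, comp_mem_envSemigroup hr (comp_mem_envSemigroup hp hs), rfl⟩)
  exact ⟨q, hq, eq_id_of_mem_envSemigroup_of_comp_self hdistal (comp_mem_envSemigroup hq hp) hidem⟩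

theorem exists_smul_mem_of_mem_envSemigroup (hdistal : ∀ x y : X, ProxPair T x y → x = y)
    {p : X → X} (hp : p ∈ envSemigroup T X) {O : Set (X → X)} (hO : IsOpen O)
    (hOE : (O ∩ envSemigroup T X).Nonempty) : ∃ t : T, t • p ∈ O := by
  obtain ⟨q, hq, hqp⟩ := exists_comp_eq_id_of_mem_envSemigroup hdistal hp
  obtain ⟨r, hrO, hrE⟩ := hOE
  have hrq : r ∘ q ∈ (· ∘ p) ⁻¹' O := by
    rwa [mem_preimage, Function.comp_assoc, hqp, Function.comp_id]
  obtain ⟨_, htO, t, rfl⟩ := mem_closure_iff.mp (comp_mem_envSemigroup hrE hq) _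
    (hO.preimage (Pi.continuous_precomp p)) hrq
  exact ⟨t, htO⟩

end Distal

theorem feebleOpenOn_eval_envSemigroup {T X : Type*} [UniformSpace X] [Group T] [MulAction T X]
    [ContinuousConstSMul T X] [CompactSpace X] [T2Space X]
    (hdistal : ∀ x y : X, ProxPair T x y → x = y) {Y : Set X} (hY : IsMinimalSubset T Y)
    {y₀ : X} (hy₀ : y₀ ∈ Y) : FeebleOpenOn (fun q : X → X => q y₀) (envSemigroup T X) Y := by
  rintro O hO ⟨p, hpO, hpE⟩
  obtain ⟨K, hKp, hK, hKO⟩ := exists_mem_nhds_isClosed_subset (hO.mem_nhds hpO)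
  obtain ⟨ts, hts⟩ := isCompact_envSemigroup.elim_finite_subcover
    (fun t : T => (t • ·) ⁻¹' interior K)
    (fun t => isOpen_interior.preimage (continuous_const_smul t))
    fun q hq => mem_iUnion.mpr (exists_smul_mem_of_mem_envSemigroup hdistal hq isOpen_interior
      ⟨p, mem_interior_iff_mem_nhds.mpr hKp, hpE⟩)
  set C := (fun q : X → X => q y₀) '' (K ∩ envSemigroup T X)
  have hC : IsClosed C :=
    ((hK.inter isClosed_closure).isCompact.image (continuous_apply y₀)).isClosed
  have hcover : Y ⊆ ⋃ t ∈ (ts : Set T), (t • ·) ⁻¹' C := by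
    rw [← image_eval_envSemigroup hY hy₀]
    rintro _ ⟨q, hq, rfl⟩
    obtain ⟨t, ht, htq⟩ := mem_iUnion₂.mp (hts hq)
    exact mem_iUnion₂.mpr ⟨t, ht, t • q, ⟨interior_subset htq, smul_mem_envSemigroup hq t⟩, rfl⟩
  obtain ⟨G, hG, hGY, hGC⟩ := exists_isOpen_inter_subset_of_subset_biUnion_preimage_smul
    hY.2.1 hY.1 hY.2.2.1 hC ts.countable_toSet hcover
  exact ⟨G, hG, hGY, hGC.trans (image_mono (inter_subset_inter_left _ hKO))⟩

theorem env_sensitive_of_distal_minimal_sensitive_general {T X : Type*} [Group T]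
    [TopologicalSpace T] [UniformSpace X] [CompactSpace X]
    [T2Space X] [MulAction T X] [ContinuousSMul T X]
    (hdistal : ∀ x y : X, ProxPair T x y → x = y)
    (Y : Set X) (hmin : IsMinimalSubset T Y) (hsens : SensitiveOn T Y) :
    SensitiveOn T (envSemigroup T X) := by
  obtain ⟨y₀, hy₀⟩ := hmin.1
  exact hsens.of_feebleOpenOn (Pi.uniformContinuous_proj _ y₀) (fun _ _ => rfl)
    (feebleOpenOn_eval_envSemigroup hdistal hmin hy₀)

/-- If `(X, T)` is distal and has a minimal sensitive subsystem, then the induced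
flow `(E(X), T)` on the enveloping semigroup is sensitive. -/
theorem env_sensitive_of_distal_minimal_sensitive {T X : Type*} [Group T]
    [TopologicalSpace T] [IsTopologicalGroup T] [UniformSpace X] [CompactSpace X]
    [T2Space X] [MulAction T X] [ContinuousSMul T X]
    (hdistal : ∀ x y : X, ProxPair T x y → x = y)
    (Y : Set X) (hmin : IsMinimalSubset T Y) (hsens : SensitiveOn T Y) :
    SensitiveOn T (envSemigroup T X) :=
  env_sensitive_of_distal_minimal_sensitive_general hdistal Y hmin hsens
end

section
/- If a flow (X,T) is uniformly rigid, then the induced flow (E(X),T) is uniformly rigid; conversely, if (X,T) is point-transitive and (E(X),T) is uniformly rigid, then (X,T) is uniformly rigid. -/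
open Filter Set Topology Uniformity

/-- A flow is uniformly rigid: for every entourage `V` some nontrivial group
element moves every point of `X` within `V` of itself. -/
def UniformlyRigid (T X : Type*) [Monoid T] [SMul T X] [UniformSpace X] : Prop :=
  ∀ V ∈ 𝓤 X, ∃ t : T, t ≠ 1 ∧ ∀ x : X, (x, t • x) ∈ V

/-- Uniform rigidity of the subflow on a subset `A` (with the relative uniformity). -/
def UniformlyRigidOn (T : Type*) {X : Type*} [Monoid T] [SMul T X] [UniformSpace X]
    (A : Set X) : Prop :=
  ∀ V ∈ 𝓤 X, ∃ t : T, t ≠ 1 ∧ ∀ x ∈ A, (x, t • x) ∈ V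

section Rigidity

variable {T X Y : Type*} [Monoid T] [SMul T X] [UniformSpace X]

theorem UniformlyRigid.uniformlyRigidOn (h : UniformlyRigid T X) (A : Set X) :
    UniformlyRigidOn T A :=
  fun V hV => (h V hV).imp fun _ ⟨ht, htV⟩ => ⟨ht, fun x _ => htV x⟩

theorem UniformlyRigid.pi (ι : Type*) (h : UniformlyRigid T X) : UniformlyRigid T (ι → X) := by
  intro V hV
  obtain ⟨U, hU, hUV⟩ := (UniformFun.hasBasis_uniformity ι X).mem_iff.mp
    (UniformFun.uniformContinuous_toFun hV)
  obtain ⟨t, ht, htU⟩ := h U hU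
  exact ⟨t, ht, fun f => hUV fun i => htU (f i)⟩

theorem UniformlyRigidOn.of_surjOn_univ [SMul T Y] [UniformSpace Y] {A : Set Y} {π : Y → X}
    (h : UniformlyRigidOn T A) (hπ : UniformContinuous π) (hπT : ∀ (t : T) y, π (t • y) = t • π y)
    (hA : SurjOn π A univ) : UniformlyRigid T X := by
  intro V hV
  obtain ⟨t, ht, htV⟩ := h _ (hπ hV)
  refine ⟨t, ht, fun x => ?_⟩
  obtain ⟨y, hy, rfl⟩ := hA (mem_univ x)
  simpa only [mem_preimage, hπT] using htV y hy

end Rigidity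

theorem surjOn_eval_envSemigroup {T X : Type*} [SMul T X] [TopologicalSpace X] [CompactSpace X]
    [T2Space X] {x₀ : X} (hx₀ : Dense (range fun t : T => t • x₀)) :
    SurjOn (fun f : X → X => f x₀) (envSemigroup T X) univ := by
  have hclosed : IsClosed ((fun f : X → X => f x₀) '' envSemigroup T X) :=
    (isClosed_closure.isCompact.image (continuous_apply x₀)).isClosed
  have horbit : range (fun t : T => t • x₀) ⊆ (fun f : X → X => f x₀) '' envSemigroup T X := by
    rintro _ ⟨t, rfl⟩
    exact ⟨_, subset_closure ⟨t, rfl⟩, rfl⟩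
  rw [SurjOn, ← hx₀.closure_eq]
  exact hclosed.closure_subset_iff.mpr horbit

theorem uniformlyRigid_env_general {T X : Type*} [Group T] [UniformSpace X] [CompactSpace X] [T2Space X]
    [MulAction T X] :
    (UniformlyRigid T X → UniformlyRigidOn T (envSemigroup T X)) ∧
      ((∃ x₀ : X, Dense (Set.range fun t : T => t • x₀)) →
        UniformlyRigidOn T (envSemigroup T X) → UniformlyRigid T X) :=
  ⟨fun h => (h.pi X).uniformlyRigidOn _, fun ⟨x₀, hx₀⟩ h =>
    h.of_surjOn_univ (Pi.uniformContinuous_proj _ x₀) (fun _ _ => rfl)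
      (surjOn_eval_envSemigroup hx₀)⟩

/-- If a flow `(X, T)` is uniformly rigid then the induced flow `(E(X), T)` is
uniformly rigid; conversely, if `(X, T)` is point-transitive and `(E(X), T)` is
uniformly rigid, then `(X, T)` is uniformly rigid. -/
theorem uniformlyRigid_env {T X : Type*} [Group T] [TopologicalSpace T]
    [IsTopologicalGroup T] [UniformSpace X] [CompactSpace X] [T2Space X]
    [MulAction T X] [ContinuousSMul T X] :
    (UniformlyRigid T X → UniformlyRigidOn T (envSemigroup T X)) ∧
      ((∃ x₀ : X, Dense (Set.range fun t : T => t • x₀)) →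
        UniformlyRigidOn T (envSemigroup T X) → UniformlyRigid T X) :=
  uniformlyRigid_env_general
end
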